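/- Let R be a commutative ring and P an R-module. If for every maximal ideal 𝔪 of R the module P is u-(R∖𝔪)-pseudo-projective, then P is pseudo-projective; that is, for every submodule K of P, every surjective R-homomorphism f : P → P/K lifts to an endomorphism g of P with f = π_K ∘ g, where π_K : P → P/K is the quotient map. -/

import Mathlib

/-!  Definitions for uniformly-S-pseudo-projective modules
(M. Adarbeh, M. Saleh, "Uniformly-S-pseudo-projective modules"). -/

universe u v w

/-- `S` is a multiplicative subset of the commutative ring `R`:
`1 ∈ S`, `0 ∉ S`, and `S` is closed under multiplication. -/
def IsMultSubset {R : Type u} [CommRing R] (S : Set R) : Prop :=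
  1 ∈ S ∧ (0 : R) ∉ S ∧ ∀ ⦃a b : R⦄, a ∈ S → b ∈ S → a * b ∈ S

/-- An `R`-module `T` is `u`-`S`-torsion if some `s ∈ S` annihilates it. -/
def IsUSTorsion {R : Type u} [CommRing R] (S : Set R) (T : Type v) [AddCommGroup T]
    [Module R T] : Prop :=
  ∃ s ∈ S, ∀ t : T, s • t = 0

/-- `f` is a `u`-`S`-monomorphism: its kernel is `u`-`S`-torsion. -/
def IsUSMono {R : Type u} [CommRing R] (S : Set R) {M : Type v} {N : Type w}
    [AddCommGroup M] [Module R M] [AddCommGroup N] [Module R N] (f : M →ₗ[R] N) : Prop :=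
  ∃ s ∈ S, ∀ m ∈ LinearMap.ker f, s • m = (0 : M)

/-- `f` is a `u`-`S`-epimorphism: its cokernel is `u`-`S`-torsion. -/
def IsUSEpi {R : Type u} [CommRing R] (S : Set R) {M : Type v} {N : Type w}
    [AddCommGroup M] [Module R M] [AddCommGroup N] [Module R N] (f : M →ₗ[R] N) : Prop :=
  ∃ s ∈ S, ∀ n : N, s • n ∈ LinearMap.range f

/-- `f` is a `u`-`S`-isomorphism: both a `u`-`S`-monomorphism and a `u`-`S`-epimorphism. -/
def IsUSIso {R : Type u} [CommRing R] (S : Set R) {M : Type v} {N : Type w}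
    [AddCommGroup M] [Module R M] [AddCommGroup N] [Module R N] (f : M →ₗ[R] N) : Prop :=
  IsUSMono S f ∧ IsUSEpi S f

/-- `P` is `u`-`S`-pseudo-projective: for every submodule `K` of `P` there is `s ∈ S` such that
every `u`-`S`-epimorphism `f : P → P/K` satisfies `s • f = π_K ∘ g` for some endomorphism
`g` of `P`. -/
def IsUSPseudoProjective {R : Type u} [CommRing R] (S : Set R) (P : Type v)
    [AddCommGroup P] [Module R P] : Prop :=
  ∀ K : Submodule R P, ∃ s ∈ S, ∀ f : P →ₗ[R] P ⧸ K, IsUSEpi S f →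
    ∃ g : P →ₗ[R] P, s • f = K.mkQ.comp g

/-- `M` is `u`-`S`-quasi-projective. -/
def IsUSQuasiProjective {R : Type u} [CommRing R] (S : Set R) (M : Type v)
    [AddCommGroup M] [Module R M] : Prop :=
  ∀ K : Submodule R M, ∃ s ∈ S, ∀ f : M →ₗ[R] M ⧸ K,
    ∃ g : M →ₗ[R] M, s • f = K.mkQ.comp g

/-- `Q` is `u`-`S`-projective (test modules in `Type v₁`). -/
def IsUSProjective.{u₁, v₁, w₁} {R : Type u₁} [CommRing R] (S : Set R) (Q : Type w₁)
    [AddCommGroup Q] [Module R Q] : Prop :=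
  ∀ (B C : Type v₁) [AddCommGroup B] [AddCommGroup C] [Module R B] [Module R C]
    (g : B →ₗ[R] C), IsUSEpi S g →
      ∃ s ∈ S, ∀ h : Q →ₗ[R] C, ∃ h' : Q →ₗ[R] B, s • h = g.comp h'

/-- `M` is `u`-`S`-injective (test modules in `Type v₁`). -/
def IsUSInjective.{u₁, v₁, w₁} {R : Type u₁} [CommRing R] (S : Set R) (M : Type w₁)
    [AddCommGroup M] [Module R M] : Prop :=
  ∀ (A B : Type v₁) [AddCommGroup A] [AddCommGroup B] [Module R A] [Module R B]
    (f : A →ₗ[R] B), IsUSMono S f →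
      ∃ s ∈ S, ∀ h : A →ₗ[R] M, ∃ h' : B →ₗ[R] M, s • h = h'.comp f

/-- `E` is `u`-`S`-pseudo-injective. -/
def IsUSPseudoInjective {R : Type u} [CommRing R] (S : Set R) (E : Type v)
    [AddCommGroup E] [Module R E] : Prop :=
  ∀ K : Submodule R E, ∃ s ∈ S, ∀ f : ↥K →ₗ[R] E, IsUSMono S f →
    ∃ g : E →ₗ[R] E, g.comp K.subtype = s • f

/-- The sequence `0 → A →f B →g C → 0` is short `u`-`S`-exact. -/
def IsShortUSExact {R : Type u} [CommRing R] (S : Set R) {A B C : Type v}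
    [AddCommGroup A] [Module R A] [AddCommGroup B] [Module R B] [AddCommGroup C] [Module R C]
    (f : A →ₗ[R] B) (g : B →ₗ[R] C) : Prop :=
  IsUSMono S f ∧ IsUSEpi S g ∧
    ∃ s ∈ S, (∀ x ∈ LinearMap.ker g, s • x ∈ LinearMap.range f) ∧
      (∀ x ∈ LinearMap.range f, s • x ∈ LinearMap.ker g)

/-- The short `u`-`S`-exact sequence `0 → A →f B →g C → 0` is `u`-`S`-split:
some multiple `s • 1_A` of the identity factors back through `f`. -/
def IsUSSplitSeq {R : Type u} [CommRing R] (S : Set R) {A B : Type v}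
    [AddCommGroup A] [Module R A] [AddCommGroup B] [Module R B] (f : A →ₗ[R] B) : Prop :=
  ∃ s ∈ S, ∃ f' : B →ₗ[R] A, f'.comp f = s • (LinearMap.id : A →ₗ[R] A)

/-- `M` is a `u`-`S`-semisimple module (test sequences with modules in `Type v₁`). -/
def IsUSSemisimpleModule.{u₁, v₁} {R : Type u₁} [CommRing R] (S : Set R) (M : Type v₁)
    [AddCommGroup M] [Module R M] : Prop :=
  ∀ (A C : Type v₁) [AddCommGroup A] [AddCommGroup C] [Module R A] [Module R C]
    (f : A →ₗ[R] M) (g : M →ₗ[R] C), IsShortUSExact S f g → IsUSSplitSeq S f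

/-- `R` is a `u`-`S`-semisimple ring: every free `R`-module is `u`-`S`-semisimple. -/
def IsUSSemisimpleRing.{u₁, v₁} {R : Type u₁} [CommRing R] (S : Set R) : Prop :=
  ∀ (F : Type v₁) [AddCommGroup F] [Module R F], Module.Free R F →
    IsUSSemisimpleModule.{u₁, v₁} S F

/-- A submodule `N` of `M` is a `u`-`S`-direct summand of `M` if there is an `R`-module `N'`
and a `u`-`S`-isomorphism between `M` and `N ⊕ N'`. -/
def IsUSDirectSummand {R : Type u} [CommRing R] (S : Set R) {M : Type v}
    [AddCommGroup M] [Module R M] (N : Submodule R M) : Prop :=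
  ∃ (N' : ModuleCat.{v} R) (h : M →ₗ[R] (↥N × ↥N')), IsUSIso S h

/-- `A` is `u`-`S`-projective relative to `B`. -/
def IsUSProjectiveRel {R : Type u} [CommRing R] (S : Set R) (A : Type v) (B : Type w)
    [AddCommGroup A] [Module R A] [AddCommGroup B] [Module R B] : Prop :=
  ∀ K : Submodule R B, ∃ s ∈ S, ∀ f : A →ₗ[R] B ⧸ K,
    ∃ h : A →ₗ[R] B, s • f = K.mkQ.comp h

/-!
A surjection `f : P → P/K` is a `u`-`(R∖𝔪)`-epimorphism for every maximal ideal `𝔪`, so the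
hypothesis gives, for each `𝔪`, a scalar `s ∉ 𝔪` such that `s • f` lifts along `π_K`. The scalars
`r` for which `r • f` lifts form an ideal; lying in no maximal ideal, it contains `1`, and the
lift for `r = 1` is the required one.
-/

section LiftingIdeal

variable {R : Type*} [CommRing R] {M N P : Type*} [AddCommGroup M] [Module R M]
  [AddCommGroup N] [Module R N] [AddCommGroup P] [Module R P]

def liftingIdeal (π : P →ₗ[R] N) (f : M →ₗ[R] N) : Ideal R :=
  (LinearMap.range (LinearMap.compRight R π : (M →ₗ[R] P) →ₗ[R] M →ₗ[R] N)).comap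
    (LinearMap.toSpanSingleton R _ f)

theorem mem_liftingIdeal {π : P →ₗ[R] N} {f : M →ₗ[R] N} {r : R} :
    r ∈ liftingIdeal π f ↔ ∃ g : M →ₗ[R] P, r • f = π.comp g := by
  simp only [liftingIdeal, Submodule.mem_comap, LinearMap.toSpanSingleton_apply,
    LinearMap.mem_range, LinearMap.compRight_apply, eq_comm]

theorem exists_lift_of_forall_isMaximal {π : P →ₗ[R] N} {f : M →ₗ[R] N}
    (h : ∀ m : Ideal R, m.IsMaximal → ∃ s ∉ m, ∃ g : M →ₗ[R] P, s • f = π.comp g) :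
    ∃ g : M →ₗ[R] P, f = π.comp g := by
  have htop : liftingIdeal π f = ⊤ := by
    by_contra hne
    obtain ⟨m, hm, hle⟩ := Ideal.exists_le_maximal _ hne
    obtain ⟨s, hs, hlift⟩ := h m hm
    exact hs (hle (mem_liftingIdeal.mpr hlift))
  obtain ⟨g, hg⟩ := mem_liftingIdeal.mp (htop ▸ Submodule.mem_top : (1 : R) ∈ liftingIdeal π f)
  exact ⟨g, by rwa [one_smul] at hg⟩

theorem isUSEpi_of_surjective {S : Set R} (hS : 1 ∈ S) {f : M →ₗ[R] N}
    (hf : Function.Surjective f) : IsUSEpi S f :=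
  ⟨1, hS, fun n => by simpa only [one_smul, LinearMap.range_eq_top.mpr hf] using
    Submodule.mem_top⟩

end LiftingIdeal

/-- If `P` is `u`-`(R∖𝔪)`-pseudo-projective for every maximal ideal `𝔪` of `R`, then `P` is
pseudo-projective: every surjection `P → P/K` lifts to an endomorphism of `P`. -/
theorem pseudoProjective_of_forall_max_uSPseudoProjective
    {R : Type u} [CommRing R] {P : Type v} [AddCommGroup P] [Module R P]
    (h : ∀ m : Ideal R, m.IsMaximal → IsUSPseudoProjective ((m : Set R)ᶜ) P) :
    ∀ (K : Submodule R P) (f : P →ₗ[R] P ⧸ K), Function.Surjective f →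
      ∃ g : P →ₗ[R] P, f = K.mkQ.comp g := by
  intro K f hf
  refine exists_lift_of_forall_isMaximal fun m hm => ?_
  obtain ⟨s, hs, hlift⟩ := h m hm K
  exact ⟨s, hs, hlift f (isUSEpi_of_surjective (Ideal.one_notMem m) hf)⟩
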